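/- Suppose E has the Dunford–Pettis property and every bounded linear operator from E to F is weakly compact. Then for every k ∈ ℕ, every continuous k-homogeneous polynomial from E to F is completely continuous. -/

import Mathlib

open Filter Topology NormedSpace ContinuousLinearMap ZeroAtInfty

noncomputable section

/-- A formal series is weakly unconditionally Cauchy. -/
def WUC {E : Type*} [NormedAddCommGroup E] [NormedSpace ℝ E] (x : ℕ → E) : Prop :=
  ∀ φ : E →L[ℝ] ℝ, Summable fun i => |φ (x i)|

/-- A series is unconditionally convergent: every subseries is norm convergent. -/
def UncondConv {F : Type*} [NormedAddCommGroup F] [NormedSpace ℝ F] (y : ℕ → F) : Prop :=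
  ∀ s : Set ℕ, ∃ a : F,
    Tendsto (fun n => ∑ i ∈ Finset.range n, Set.indicator s y i) atTop (𝓝 a)

def WeaklyConvTo {E : Type*} [NormedAddCommGroup E] [NormedSpace ℝ E]
    (x : ℕ → E) (x₀ : E) : Prop :=
  ∀ φ : E →L[ℝ] ℝ, Tendsto (fun n => φ (x n)) atTop (𝓝 (φ x₀))

def WeaklyCauchy {E : Type*} [NormedAddCommGroup E] [NormedSpace ℝ E] (x : ℕ → E) : Prop :=
  ∀ φ : E →L[ℝ] ℝ, ∃ l : ℝ, Tendsto (fun n => φ (x n)) atTop (𝓝 l)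

/-- Unconditionally converging operator. -/
def UCop {E F : Type*} [NormedAddCommGroup E] [NormedSpace ℝ E]
    [NormedAddCommGroup F] [NormedSpace ℝ F] (T : E →L[ℝ] F) : Prop :=
  ∀ x : ℕ → E, WUC x → UncondConv fun i => T (x i)

/-- Completely continuous operator. -/
def CCop {E F : Type*} [NormedAddCommGroup E] [NormedSpace ℝ E]
    [NormedAddCommGroup F] [NormedSpace ℝ F] (T : E →L[ℝ] F) : Prop :=
  ∀ (x : ℕ → E) (x₀ : E), WeaklyConvTo x x₀ →
    Tendsto (fun n => T (x n)) atTop (𝓝 (T x₀))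

/-- Weakly compact operator: the image of the closed unit ball is relatively
weakly compact. -/
def WCompactOp {E F : Type*} [NormedAddCommGroup E] [NormedSpace ℝ E]
    [NormedAddCommGroup F] [NormedSpace ℝ F] (T : E →L[ℝ] F) : Prop :=
  IsCompact (closure (toWeakSpaceCLM ℝ F '' (T '' Metric.closedBall 0 1)))

/-- The Dunford–Pettis property. -/
def DPP (E : Type*) [NormedAddCommGroup E] [NormedSpace ℝ E] : Prop :=
  ∀ (F : Type) (_ : NormedAddCommGroup F) (_ : NormedSpace ℝ F) (_ : CompleteSpace F),
    ∀ T : E →L[ℝ] F, WCompactOp T → CCop T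

/-- The adjoint of an operator between Banach spaces. -/
def opAdj {E F : Type*} [NormedAddCommGroup E] [NormedSpace ℝ E]
    [NormedAddCommGroup F] [NormedSpace ℝ F] (T : E →L[ℝ] F) :
    StrongDual ℝ F →L[ℝ] StrongDual ℝ E :=
  (ContinuousLinearMap.compSL E F ℝ (RingHom.id ℝ) (RingHom.id ℝ)).flip T

/-- The second adjoint (bitranspose). -/
def biAdj {E F : Type*} [NormedAddCommGroup E] [NormedSpace ℝ E]
    [NormedAddCommGroup F] [NormedSpace ℝ F] (T : E →L[ℝ] F) :
    StrongDual ℝ (StrongDual ℝ E) →L[ℝ] StrongDual ℝ (StrongDual ℝ F) :=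
  opAdj (opAdj T)


/-!
Expanding `A (x₀ + (xₙ - x₀), …, x₀ + (xₙ - x₀))` multilinearly, it suffices that a continuous
multilinear map sends tuples of weakly null sequences to null sequences; this goes by induction
on the number of variables. For one variable, the operator `R` is weakly compact, hence so is its
composition with the map `F → ℓ^∞` given by norming functionals `ψₙ` of `R zₙ`, and the
Dunford–Pettis property gives `‖R zₙ‖ = ψₙ (R zₙ) → 0`. For `D (w, x)` with one more variable,
let `ψⱼ` norm `D (wⱼ, zⱼ)`. By induction `x ↦ (ψⱼ (D (wⱼ, x)))ⱼ` maps `E` to `c₀`, and it is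
weakly compact: since each `D (w, ·)` is weakly compact, every pointwise limit of its values on
the unit ball has the form `(ψⱼ (D' wⱼ))ⱼ` for a continuous multilinear `D'`, which is again null
by induction, and on bounded sets of `c₀` coordinatewise convergence to a point of `c₀` is weak
convergence. The Dunford–Pettis property then gives `ψⱼ (D (wⱼ, zⱼ)) → 0`.
-/

open scoped BoundedContinuousFunction

namespace WeaklyConvTo

variable {E : Type*} [NormedAddCommGroup E] [NormedSpace ℝ E] {x : ℕ → E} {x₀ : E}

lemma sub_limit (hx : WeaklyConvTo x x₀) : WeaklyConvTo (fun n => x n - x₀) 0 := fun φ => by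
  simpa using (hx φ).sub_const (φ x₀)

lemma exists_norm_le (hx : WeaklyConvTo x x₀) : ∃ M, ∀ n, ‖x n‖ ≤ M := by
  obtain ⟨M, hM⟩ := banach_steinhaus (g := fun n => inclusionInDoubleDualLi ℝ (x n)) fun φ => by
    obtain ⟨C, hC⟩ := (hx φ).norm.bddAbove_range
    exact ⟨C, fun n => hC ⟨n, rfl⟩⟩
  exact ⟨M, fun n => (inclusionInDoubleDualLi ℝ).norm_map (x n) ▸ hM n⟩

end WeaklyConvTo

namespace ZeroAtInftyContinuousMap

def ofTendsto (u : ℕ → ℝ) (hu : Tendsto u atTop (𝓝 0)) : C₀(ℕ, ℝ) :=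
  ⟨⟨u, continuous_of_discreteTopology⟩, by rwa [cocompact_eq_atTop]⟩

@[simp]
lemma ofTendsto_apply (u : ℕ → ℝ) (hu : Tendsto u atTop (𝓝 0)) (n : ℕ) : ofTendsto u hu n = u n :=
  rfl

lemma tendsto_atTop_zero (f : C₀(ℕ, ℝ)) : Tendsto f atTop (𝓝 0) :=
  cocompact_eq_atTop (α := ℕ) ▸ f.zero_at_infty'

lemma abs_apply_le_norm (f : C₀(ℕ, ℝ)) (n : ℕ) : |f n| ≤ ‖f‖ := by
  simpa [norm_toBCF_eq_norm] using f.toBCF.norm_coe_le_norm n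

lemma norm_le_of_forall_abs_le {f : C₀(ℕ, ℝ)} {C : ℝ} (hC : 0 ≤ C) (h : ∀ n, |f n| ≤ C) :
    ‖f‖ ≤ C := by
  rw [← norm_toBCF_eq_norm]
  exact (BoundedContinuousFunction.norm_le hC).2 h

def evalCLM (n : ℕ) : StrongDual ℝ C₀(ℕ, ℝ) :=
  LinearMap.mkContinuous ⟨⟨fun f => f n, fun _ _ => rfl⟩, fun _ _ => rfl⟩ 1 fun f => by
    simpa using f.abs_apply_le_norm n

lemma sum_apply {ι : Type*} (s : Finset ι) (f : ι → C₀(ℕ, ℝ)) (n : ℕ) :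
    (∑ i ∈ s, f i) n = ∑ i ∈ s, f i n :=
  map_sum (evalCLM n) f s

def single (n : ℕ) : C₀(ℕ, ℝ) :=
  ofTendsto (fun m => if m = n then 1 else 0) <| tendsto_const_nhds.congr' <|
    (eventually_gt_atTop n).mono fun _ hm => (if_neg hm.ne').symm

lemma sum_smul_single_apply (u : ℕ → ℝ) (s : Finset ℕ) (m : ℕ) :
    (∑ n ∈ s, u n • single n) m = if m ∈ s then u m else 0 := by
  simp [sum_apply, single]

lemma tendsto_sum_smul_single (u : C₀(ℕ, ℝ)) :
    Tendsto (fun N => ∑ n ∈ Finset.range N, u n • single n) atTop (𝓝 u) := by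
  refine Metric.tendsto_atTop.2 fun ε hε => ?_
  obtain ⟨N₀, hN₀⟩ := Metric.tendsto_atTop.1 u.tendsto_atTop_zero (ε / 2) (half_pos hε)
  refine ⟨N₀, fun N hN => (dist_eq_norm _ _).trans_lt <| lt_of_le_of_lt
    (norm_le_of_forall_abs_le (half_pos hε).le fun m => ?_) (half_lt_self hε)⟩
  rw [sub_apply, sum_smul_single_apply]
  split_ifs with hm
  · simpa using (half_pos hε).le
  · simpa [Real.dist_eq] using (hN₀ m (by simp at hm; omega)).le

lemma summable_abs_apply_single (Λ : StrongDual ℝ C₀(ℕ, ℝ)) :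
    Summable fun n => |Λ (single n)| := by
  refine summable_of_sum_range_le (c := ‖Λ‖) (fun _ => abs_nonneg _) fun N => ?_
  set g := ∑ n ∈ Finset.range N, (SignType.sign (Λ (single n)) : ℝ) • single n
  have hg : ‖g‖ ≤ 1 := norm_le_of_forall_abs_le zero_le_one fun m => by
    rw [sum_smul_single_apply]
    split_ifs
    · cases SignType.sign (Λ (single m)) <;> simp
    · simp
  calc ∑ n ∈ Finset.range N, |Λ (single n)| = Λ g := by simp [g, map_sum]
    _ ≤ ‖Λ‖ * ‖g‖ := (le_abs_self _).trans (Λ.le_opNorm g)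
    _ ≤ ‖Λ‖ := mul_le_of_le_one_right (norm_nonneg Λ) hg

lemma hasSum_dual (Λ : StrongDual ℝ C₀(ℕ, ℝ)) (u : C₀(ℕ, ℝ)) :
    HasSum (fun n => Λ (single n) * u n) (Λ u) := by
  have hsum : Summable fun n => Λ (single n) * u n :=
    .of_norm_bounded ((summable_abs_apply_single Λ).mul_right ‖u‖) fun n => by
      simpa [abs_mul] using mul_le_mul_of_nonneg_left (u.abs_apply_le_norm n) (abs_nonneg _)
  refine (hsum.hasSum_iff_tendsto_nat).2 ?_
  simpa [Function.comp_def, map_sum, mul_comm] using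
    (Λ.continuous.tendsto u).comp u.tendsto_sum_smul_single

lemma continuous_toWeakSpace_of_abs_le {X : Type*} [TopologicalSpace X] {Φ : X → C₀(ℕ, ℝ)}
    (hΦ : ∀ n, Continuous fun x => Φ x n) {C : ℝ} (hC : ∀ x n, |Φ x n| ≤ C) :
    Continuous fun x => toWeakSpace ℝ C₀(ℕ, ℝ) (Φ x) := by
  refine WeakBilin.continuous_of_continuous_eval _ fun Λ => ?_
  change Continuous fun x => Λ (Φ x)
  simp_rw [← fun x => (hasSum_dual Λ (Φ x)).tsum_eq]
  refine continuous_tsum (fun n => continuous_const.mul (hΦ n))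
    ((summable_abs_apply_single Λ).mul_right C) fun n x => ?_
  simpa [abs_mul] using mul_le_mul_of_nonneg_left (hC x n) (abs_nonneg _)

end ZeroAtInftyContinuousMap

section SequenceOperators

variable {E : Type*} [NormedAddCommGroup E] [NormedSpace ℝ E]

def toLinftyOfDualSeq (φ : ℕ → StrongDual ℝ E) {C : ℝ} (hC : ∀ n, ‖φ n‖ ≤ C) :
    E →L[ℝ] (ℕ →ᵇ ℝ) :=
  LinearMap.mkContinuous
    { toFun x := BoundedContinuousFunction.ofNormedAddCommGroup (fun n => φ n x)
        continuous_of_discreteTopology (C * ‖x‖) fun n => (φ n).le_of_opNorm_le (hC n) x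
      map_add' _ _ := by ext; simp
      map_smul' _ _ := by ext; simp }
    C fun x => BoundedContinuousFunction.norm_ofNormedAddCommGroup_le _
      (mul_nonneg ((norm_nonneg _).trans (hC 0)) (norm_nonneg x))
      fun n => (φ n).le_of_opNorm_le (hC n) x

@[simp]
lemma toLinftyOfDualSeq_apply (φ : ℕ → StrongDual ℝ E) {C : ℝ} (hC : ∀ n, ‖φ n‖ ≤ C) (x : E)
    (n : ℕ) : toLinftyOfDualSeq φ hC x n = φ n x :=
  rfl

def toC0OfDualSeq (φ : ℕ → StrongDual ℝ E) (hφ : ∀ x, Tendsto (fun n => φ n x) atTop (𝓝 0))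
    {C : ℝ} (hC : ∀ n, ‖φ n‖ ≤ C) : E →L[ℝ] C₀(ℕ, ℝ) :=
  LinearMap.mkContinuous
    { toFun x := .ofTendsto (fun n => φ n x) (hφ x)
      map_add' _ _ := by ext; simp
      map_smul' _ _ := by ext; simp }
    C fun x => ZeroAtInftyContinuousMap.norm_le_of_forall_abs_le
      (mul_nonneg ((norm_nonneg _).trans (hC 0)) (norm_nonneg x)) fun n =>
        (φ n).le_of_opNorm_le (hC n) x

@[simp]
lemma toC0OfDualSeq_apply (φ : ℕ → StrongDual ℝ E) (hφ : ∀ x, Tendsto (fun n => φ n x) atTop (𝓝 0))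
    {C : ℝ} (hC : ∀ n, ‖φ n‖ ≤ C) (x : E) (n : ℕ) : toC0OfDualSeq φ hφ hC x n = φ n x :=
  rfl

end SequenceOperators

section PointwiseClosure

variable {X ι : Type*} {g : X → ι → ℝ} {s : Set X} {u : ι → ℝ}

lemma abs_apply_le_of_mem_closure {b : ι → ℝ} (hb : ∀ x ∈ s, ∀ i, |g x i| ≤ b i)
    (hu : u ∈ closure (g '' s)) (i : ι) : |u i| ≤ b i :=
  closure_minimal (t := {v : ι → ℝ | |v i| ≤ b i}) (Set.image_subset_iff.2 fun x hx => hb x hx i)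
    (isClosed_le (continuous_apply i).abs continuous_const) hu

lemma isCompact_closure_image_of_abs_le {b : ι → ℝ} (hb : ∀ x ∈ s, ∀ i, |g x i| ≤ b i) :
    IsCompact (closure (g '' s)) :=
  (isCompact_univ_pi fun i => isCompact_Icc (a := -b i) (b := b i)).of_isClosed_subset
    isClosed_closure fun _ hu i _ => abs_le.1 (abs_apply_le_of_mem_closure hb hu i)

lemma apply_eq_of_mem_closure (hu : u ∈ closure (g '' s)) {i j k : ι} {a b : ℝ}
    (h : ∀ x ∈ s, g x i = a * g x j + b * g x k) : u i = a * u j + b * u k :=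
  closure_minimal (t := {v : ι → ℝ | v i = a * v j + b * v k})
    (Set.image_subset_iff.2 h) (isClosed_eq (continuous_apply i)
      ((continuous_const.mul (continuous_apply j)).add (continuous_const.mul (continuous_apply k))))
    hu

end PointwiseClosure

section WeaklyCompact

variable {E F G : Type*} [NormedAddCommGroup E] [NormedSpace ℝ E] [NormedAddCommGroup F]
  [NormedSpace ℝ F] [NormedAddCommGroup G] [NormedSpace ℝ G]

lemma WCompactOp.of_subset {T : E →L[ℝ] F} {K : Set (WeakSpace ℝ F)} (hK : IsCompact K)
    (hTK : ∀ x ∈ Metric.closedBall (0 : E) 1, toWeakSpaceCLM ℝ F (T x) ∈ K) : WCompactOp T :=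
  hK.closure.of_isClosed_subset isClosed_closure <|
    closure_mono <| by rintro _ ⟨_, ⟨x, hx, rfl⟩, rfl⟩; exact hTK x hx

lemma WCompactOp.comp (J : F →L[ℝ] G) {R : E →L[ℝ] F} (hR : WCompactOp R) :
    WCompactOp (J.comp R) :=
  .of_subset (hR.image (WeakSpace.map J).continuous) fun x hx =>
    ⟨_, subset_closure ⟨R x, ⟨x, hx, rfl⟩, rfl⟩, rfl⟩

lemma WCompactOp.exists_eq_apply_of_mem_closure {T : E →L[ℝ] F} (hT : WCompactOp T)
    {v : StrongDual ℝ F → ℝ} (hv : v ∈ closure ((fun x ψ => ψ (T x)) '' Metric.closedBall 0 1)) :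
    ∃ f : F, ∀ ψ, v ψ = ψ f := by
  let θ : WeakSpace ℝ F → StrongDual ℝ F → ℝ := fun f ψ => ψ ((toWeakSpace ℝ F).symm f)
  have hθ : Continuous θ :=
    continuous_pi fun ψ => WeakBilin.eval_continuous (topDualPairing ℝ F).flip ψ
  have hsub : (fun x ψ => ψ (T x)) '' Metric.closedBall 0 1 ⊆ θ '' closure
      (toWeakSpaceCLM ℝ F '' (T '' Metric.closedBall 0 1)) := by
    rintro _ ⟨x, hx, rfl⟩
    exact ⟨_, subset_closure ⟨T x, ⟨x, hx, rfl⟩, rfl⟩, rfl⟩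
  obtain ⟨f, -, rfl⟩ := closure_minimal hsub (hT.image hθ).isClosed hv
  exact ⟨(toWeakSpace ℝ F).symm f, fun _ => rfl⟩

lemma wCompactOp_toC0OfDualSeq {φ : ℕ → StrongDual ℝ E}
    (hφ : ∀ x, Tendsto (fun n => φ n x) atTop (𝓝 0)) {C : ℝ} (hC : ∀ n, ‖φ n‖ ≤ C)
    (hcl : ∀ v ∈ closure ((fun x n => φ n x) '' Metric.closedBall 0 1),
      Tendsto v atTop (𝓝 0)) :
    WCompactOp (toC0OfDualSeq φ hφ hC) := by
  set K := closure ((fun x n => φ n x) '' Metric.closedBall (0 : E) 1)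
  have hbound : ∀ x ∈ Metric.closedBall (0 : E) 1, ∀ n, |φ n x| ≤ C := fun x hx n =>
    ((φ n).le_of_opNorm_le (hC n) x).trans <| mul_le_of_le_one_right
      ((norm_nonneg _).trans (hC n)) (mem_closedBall_zero_iff.1 hx)
  have : CompactSpace K := isCompact_iff_compactSpace.1 (isCompact_closure_image_of_abs_le hbound)
  let Φ : K → C₀(ℕ, ℝ) := fun v => .ofTendsto v (hcl v v.2)
  have hΦ : Continuous fun v => toWeakSpace ℝ C₀(ℕ, ℝ) (Φ v) :=
    ZeroAtInftyContinuousMap.continuous_toWeakSpace_of_abs_le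
      (fun n => (continuous_apply n).comp continuous_subtype_val)
      fun v => abs_apply_le_of_mem_closure hbound v.2
  exact .of_subset (isCompact_range hΦ) fun x hx => ⟨⟨_, subset_closure ⟨x, hx, rfl⟩⟩, rfl⟩

end WeaklyCompact

section DunfordPettis

variable {E F : Type*} [NormedAddCommGroup E] [NormedSpace ℝ E] [NormedAddCommGroup F]
  [NormedSpace ℝ F]

lemma DPP.tendsto_apply (hE : DPP E) {G : Type} [NormedAddCommGroup G] [NormedSpace ℝ G]
    [CompleteSpace G] {T : E →L[ℝ] G} (hT : WCompactOp T) {z : ℕ → E} (hz : WeaklyConvTo z 0) :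
    Tendsto (fun n => T (z n)) atTop (𝓝 0) := by
  simpa using hE G _ _ inferInstance T hT z 0 hz

/-- `DPP E` only speaks about targets in `Type`, hence the detour through `ℓ^∞` instead of
applying it to `R` itself. -/
lemma tendsto_apply_of_weaklyConvTo_zero (hE : DPP E) (h : ∀ T : E →L[ℝ] F, WCompactOp T)
    (R : E →L[ℝ] F) {z : ℕ → E} (hz : WeaklyConvTo z 0) :
    Tendsto (fun n => R (z n)) atTop (𝓝 0) := by
  choose ψ hψ hψR using fun n => exists_dual_vector'' ℝ (R (z n))
  have hJR := hE.tendsto_apply ((h R).comp (toLinftyOfDualSeq ψ hψ)) hz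
  refine squeeze_zero_norm (fun n => ?_) (tendsto_zero_iff_norm_tendsto_zero.1 hJR)
  calc ‖R (z n)‖ = (toLinftyOfDualSeq ψ hψ (R (z n))) n := by simp [hψR]
    _ ≤ ‖toLinftyOfDualSeq ψ hψ (R (z n))‖ :=
        (Real.le_norm_self _).trans (BoundedContinuousFunction.norm_coe_le_norm _ n)

variable (E F) in
def SendsWeaklyNullToNull (n : ℕ) : Prop :=
  ∀ (D : ContinuousMultilinearMap ℝ (fun _ : Fin n => E) F) (y : Fin n → ℕ → E),
    (∀ i, WeaklyConvTo (y i) 0) → Tendsto (fun j => D fun i => y i j) atTop (𝓝 0)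

lemma sendsWeaklyNullToNull_one (hE : DPP E) (h : ∀ T : E →L[ℝ] F, WCompactOp T) :
    SendsWeaklyNullToNull E F 1 := fun D y hy => by
  convert tendsto_apply_of_weaklyConvTo_zero hE h (continuousMultilinearCurryFin1 ℝ E F D) (hy 0)
    using 3 with j
  simp only [continuousMultilinearCurryFin1_apply]
  congr 1
  ext i
  simp [Fin.fin_one_eq_zero i]

section Induction

variable {n : ℕ} (Dr : ContinuousMultilinearMap ℝ (fun _ : Fin n => E) (E →L[ℝ] F))

/-- Pointwise limits of `dualEval Dr x` over the unit ball stand in for the bidual ball. -/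
def dualEval (x : E) : StrongDual ℝ F × (Fin n → E) → ℝ := fun p => p.1 (Dr p.2 x)

lemma abs_dualEval_le (x : E) (hx : x ∈ Metric.closedBall 0 1)
    (p : StrongDual ℝ F × (Fin n → E)) : |dualEval Dr x p| ≤ ‖p.1‖ * (‖Dr‖ * ∏ i, ‖p.2 i‖) := by
  rw [← Real.norm_eq_abs]
  refine (p.1.le_opNorm _).trans (mul_le_mul_of_nonneg_left ?_ (norm_nonneg _))
  exact ((Dr p.2).le_of_opNorm_le (Dr.le_opNorm p.2) x).trans
    (mul_le_of_le_one_right (by positivity) (mem_closedBall_zero_iff.1 hx))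

lemma exists_multilinear_of_mem_closure_dualEval (h : ∀ T : E →L[ℝ] F, WCompactOp T)
    {u : StrongDual ℝ F × (Fin n → E) → ℝ}
    (hu : u ∈ closure (dualEval Dr '' Metric.closedBall 0 1)) :
    ∃ D : ContinuousMultilinearMap ℝ (fun _ : Fin n => E) F, ∀ ψ w, u (ψ, w) = ψ (D w) := by
  have hvec : ∀ w, ∃ f : F, ∀ ψ, u (ψ, w) = ψ f := fun w =>
    (h (Dr w)).exists_eq_apply_of_mem_closure <| map_mem_closure
      (continuous_pi fun ψ => continuous_apply (ψ, w)) hu <| by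
        rintro _ ⟨x, hx, rfl⟩; exact ⟨x, hx, rfl⟩
  choose f hf using hvec
  let D : MultilinearMap ℝ (fun _ : Fin n => E) F :=
    { toFun := f
      map_update_add' := fun w i a b =>
        (SeparatingDual.eq_iff_forall_dual_eq (R := ℝ)).2 fun ψ => by
          rw [map_add, ← hf, ← hf, ← hf]
          simpa using apply_eq_of_mem_closure hu (i := (ψ, Function.update w i (a + b)))
            (j := (ψ, Function.update w i a)) (k := (ψ, Function.update w i b)) (a := 1) (b := 1)
            fun x _ => by simp [dualEval, Dr.map_update_add]
      map_update_smul' := fun w i c a =>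
        (SeparatingDual.eq_iff_forall_dual_eq (R := ℝ)).2 fun ψ => by
          rw [map_smul, ← hf, ← hf]
          simpa using apply_eq_of_mem_closure hu (i := (ψ, Function.update w i (c • a)))
            (j := (ψ, Function.update w i a)) (k := (ψ, Function.update w i a)) (a := c) (b := 0)
            fun x _ => by simp [dualEval, Dr.map_update_smul] }
  refine ⟨D.mkContinuous ‖Dr‖ fun w => norm_le_dual_bound ℝ _ (by positivity) fun ψ => ?_,
    fun ψ w => hf w ψ⟩
  change ‖ψ (f w)‖ ≤ _
  rw [← hf, Real.norm_eq_abs, mul_comm]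
  exact abs_apply_le_of_mem_closure (abs_dualEval_le Dr) hu (ψ, w)

lemma tendsto_of_mem_closure_dualEval_diagonal (h : ∀ T : E →L[ℝ] F, WCompactOp T)
    (IH : SendsWeaklyNullToNull E F n) {W : ℕ → Fin n → E}
    (hW : ∀ i, WeaklyConvTo (fun j => W j i) 0) {ψ : ℕ → StrongDual ℝ F} (hψ : ∀ j, ‖ψ j‖ ≤ 1)
    {v : ℕ → ℝ} (hv : v ∈ closure ((fun x j => ψ j (Dr (W j) x)) '' Metric.closedBall 0 1)) :
    Tendsto v atTop (𝓝 0) := by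
  let π : (StrongDual ℝ F × (Fin n → E) → ℝ) → ℕ → ℝ := fun u j => u (ψ j, W j)
  have hK := isCompact_closure_image_of_abs_le (abs_dualEval_le Dr)
  obtain ⟨u, hu, rfl⟩ : v ∈ π '' closure (dualEval Dr '' Metric.closedBall 0 1) :=
    closure_minimal (by rintro _ ⟨x, hx, rfl⟩; exact ⟨_, subset_closure ⟨x, hx, rfl⟩, rfl⟩)
      (hK.image (continuous_pi fun j => continuous_apply _)).isClosed hv
  obtain ⟨D, hD⟩ := exists_multilinear_of_mem_closure_dualEval Dr h hu
  refine squeeze_zero_norm (fun j => ?_)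
    (tendsto_zero_iff_norm_tendsto_zero.1 (IH D (fun i j => W j i) hW))
  change ‖u (ψ j, W j)‖ ≤ _
  rw [hD]
  exact ((ψ j).le_of_opNorm_le (hψ j) _).trans_eq (one_mul _)

end Induction

lemma SendsWeaklyNullToNull.succ {n : ℕ} (hE : DPP E) (h : ∀ T : E →L[ℝ] F, WCompactOp T)
    (IH : SendsWeaklyNullToNull E F n) : SendsWeaklyNullToNull E F (n + 1) := by
  intro D y hy
  set Dr := continuousMultilinearCurryRightEquiv ℝ (fun _ : Fin (n + 1) => E) F D
  set W : ℕ → Fin n → E := fun j i => y i.castSucc j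
  set z := y (Fin.last n)
  have hD : ∀ j, (D fun i => y i j) = Dr (W j) (z j) := fun j => by
    simp only [Dr, continuousMultilinearCurryRightEquiv_apply]
    congr 1
    ext i
    induction i using Fin.lastCases <;> simp [W, z]
  choose ψ hψ hψD using fun j => exists_dual_vector'' ℝ (D fun i => y i j)
  choose M hM using fun i : Fin n => (hy i.castSucc).exists_norm_le
  have hφ : ∀ x, Tendsto (fun j => (ψ j).comp (Dr (W j)) x) atTop (𝓝 0) := fun x =>
    squeeze_zero_norm (fun j => ((ψ j).le_of_opNorm_le (hψ j) _).trans_eq (one_mul _))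
      (tendsto_zero_iff_norm_tendsto_zero.1 <|
        IH ((ContinuousLinearMap.apply ℝ F x).compContinuousMultilinearMap Dr) _ fun i => hy _)
  have hC : ∀ j, ‖(ψ j).comp (Dr (W j))‖ ≤ ‖Dr‖ * ∏ i, M i := fun j =>
    ((ψ j).opNorm_comp_le _).trans <| (mul_le_of_le_one_left (norm_nonneg _) (hψ j)).trans <|
      Dr.le_opNorm_mul_prod_of_le fun i => hM i j
  have hT := wCompactOp_toC0OfDualSeq hφ hC fun v hv =>
    tendsto_of_mem_closure_dualEval_diagonal Dr h IH (fun i => hy i.castSucc) hψ hv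
  refine squeeze_zero_norm (fun j => ?_)
    (tendsto_zero_iff_norm_tendsto_zero.1 (hE.tendsto_apply hT (hy (Fin.last n))))
  calc ‖D fun i => y i j‖ = ψ j (D fun i => y i j) := by simp [hψD]
    _ = toC0OfDualSeq _ hφ hC (z j) j := by simp [hD]
    _ ≤ ‖toC0OfDualSeq _ hφ hC (z j)‖ :=
      (le_abs_self _).trans (ZeroAtInftyContinuousMap.abs_apply_le_norm _ _)

lemma sendsWeaklyNullToNull (hE : DPP E) (h : ∀ T : E →L[ℝ] F, WCompactOp T) {n : ℕ}
    (hn : 0 < n) : SendsWeaklyNullToNull E F n := by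
  induction n, hn using Nat.le_induction with
  | base => exact sendsWeaklyNullToNull_one hE h
  | succ n _ IH => exact IH.succ hE h

end DunfordPettis

theorem dpp_weakly_compact_implies_cc_poly_general {E F : Type*} [NormedAddCommGroup E] [NormedSpace ℝ E] [NormedAddCommGroup F] [NormedSpace ℝ F]
    (hE : DPP E) (h : ∀ T : E →L[ℝ] F, WCompactOp T) :
    ∀ (k : ℕ) (A : ContinuousMultilinearMap ℝ (fun _ : Fin k => E) F) (x : ℕ → E) (x₀ : E), WeaklyConvTo x x₀ →
      Tendsto (fun n => A fun _ => x n) atTop (𝓝 (A fun _ => x₀)) := by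
  intro k A x x₀ hx
  let term (n : ℕ) (s : Finset (Fin k)) := A (s.piecewise (fun _ => x n - x₀) fun _ => x₀)
  have hexp : ∀ n, (A fun _ => x n) = A (fun _ => x₀) + ∑ s ∈ Finset.univ.erase ∅, term n s :=
    fun n => by
      rw [show (A fun _ => x₀) = term n ∅ by simp [term],
        Finset.add_sum_erase _ _ (Finset.mem_univ _)]
      convert A.map_add_univ (fun _ => x n - x₀) fun _ => x₀
      simp
  have hterm : ∀ s ∈ Finset.univ.erase ∅, Tendsto (term · s) atTop (𝓝 0) := fun s hs =>
    sendsWeaklyNullToNull hE h (Finset.card_pos.2 (Finset.nonempty_iff_ne_empty.2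
      (Finset.ne_of_mem_erase hs))) (A.restr s rfl x₀) _ fun _ => hx.sub_limit
  simpa [hexp] using tendsto_const_nhds.add (tendsto_finsetSum _ hterm)

theorem dpp_weakly_compact_implies_cc_poly {E F : Type*} [NormedAddCommGroup E] [NormedSpace ℝ E] [CompleteSpace E] [NormedAddCommGroup F] [NormedSpace ℝ F] [CompleteSpace F]
    (hE : DPP E) (h : ∀ T : E →L[ℝ] F, WCompactOp T) :
    ∀ (k : ℕ) (A : ContinuousMultilinearMap ℝ (fun _ : Fin k => E) F) (x : ℕ → E) (x₀ : E), WeaklyConvTo x x₀ →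
      Tendsto (fun n => A fun _ => x n) atTop (𝓝 (A fun _ => x₀)) :=
  dpp_weakly_compact_implies_cc_poly_general hE h
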